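/- arXiv:2007.08204 — 4 statements merged into one kernel-verified Lean document; each statement's English description precedes it below -/
import Mathlib

section
/- There exist constants C > 0 and ε₀ ∈ (0, 1/4) such that the following holds for every ε ∈ (0, ε₀). Let n ≥ 1, w ∈ ℤ^n, τ ∈ ℤ, α ∈ [0,1], and let A, B ⊆ {0,1}^n satisfy: (i) every a ∈ A has exactly αn coordinates equal to 1; (ii) ⟨w, b⟩ = τ for every b ∈ B; (iii) the map a ↦ ⟨w, a⟩ is injective on A. If |B| ≥ 2^{(1−ε)n}, then |A| ≤ 2^{δn} with δ := C · log₂(log₂(1/ε)) / √(log₂(1/ε)). -/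
/-!
For `r : ℕ`, the map `(a, b₀, …, b_{r-1}) ↦ a + ∑ⱼ 2ʲ bⱼ` is injective on `A × Bʳ`: pairing
with `w` gives `⟨w, a⟩ + (2ʳ - 1) τ`, which determines `a`, and the binary digits of each
coordinate then determine the `bⱼ`. The image lies in `{0, …, 2ʳ}ⁿ`, so
`|A| |B|ʳ ≤ (2ʳ + 1)ⁿ`. With `|B| ≥ 2^((1-ε)n)` and `r = ⌈log₂(1/ε)⌉` this gives
`|A| ≤ 2^((εr + 2·2⁻ʳ) n) ≤ 2^(ε (t + 3) n)` with `t = log₂(1/ε)`, and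
`ε (t + 3) √t = 2⁻ᵗ (t + 3) √t ≤ 10 ≤ 10 log₂ t` once `t ≥ 3`.
-/

open Finset Real

section BinaryExpansion

variable {r n : ℕ}

lemma sum_two_pow_mul_succ (f : Fin (r + 1) → ℤ) :
    ∑ j : Fin (r + 1), 2 ^ (j : ℕ) * f j = f 0 + 2 * ∑ j : Fin r, 2 ^ (j : ℕ) * f j.succ := by
  rw [Fin.sum_univ_succ, mul_sum]
  simp only [Fin.val_zero, pow_zero, one_mul, Fin.val_succ, pow_succ]
  congr 1
  exact sum_congr rfl fun j _ => by ring

lemma sum_two_pow_mul_bounds {f : Fin r → ℤ} (hf : ∀ j, f j = 0 ∨ f j = 1) :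
    0 ≤ ∑ j : Fin r, 2 ^ (j : ℕ) * f j ∧ ∑ j : Fin r, 2 ^ (j : ℕ) * f j < 2 ^ r := by
  induction r with
  | zero => simp
  | succ r ih =>
    obtain ⟨h0, h1⟩ := ih (fun j => hf j.succ)
    rw [sum_two_pow_mul_succ, pow_succ]
    rcases hf 0 with h | h <;> rw [h] <;> constructor <;> linarith

lemma sum_two_pow_mul_injective {f g : Fin r → ℤ} (hf : ∀ j, f j = 0 ∨ f j = 1)
    (hg : ∀ j, g j = 0 ∨ g j = 1)
    (h : ∑ j : Fin r, 2 ^ (j : ℕ) * f j = ∑ j : Fin r, 2 ^ (j : ℕ) * g j) : f = g := by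
  induction r with
  | zero => exact funext fun j => j.elim0
  | succ r ih =>
    rw [sum_two_pow_mul_succ, sum_two_pow_mul_succ] at h
    have h0 : f 0 = g 0 := by rcases hf 0 with h₁ | h₁ <;> rcases hg 0 with h₂ | h₂ <;> omega
    have htail := ih (fun j => hf j.succ) (fun j => hg j.succ) (by omega)
    exact funext fun j => Fin.cases h0 (fun j => congrFun htail j) j

def addBinary (a : Fin n → ℤ) (b : Fin r → Fin n → ℤ) : Fin n → ℤ :=
  a + ∑ j : Fin r, (2 : ℤ) ^ (j : ℕ) • b j

lemma addBinary_apply (a : Fin n → ℤ) (b : Fin r → Fin n → ℤ) (i : Fin n) :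
    addBinary a b i = a i + ∑ j : Fin r, 2 ^ (j : ℕ) * b j i := by
  simp [addBinary, Finset.sum_apply]

lemma dotProduct_addBinary (w a : Fin n → ℤ) (b : Fin r → Fin n → ℤ) :
    w ⬝ᵥ addBinary a b = w ⬝ᵥ a + ∑ j : Fin r, 2 ^ (j : ℕ) * (w ⬝ᵥ b j) := by
  simp only [addBinary, dotProduct_add, dotProduct_sum, dotProduct_smul, smul_eq_mul]

lemma addBinary_mem_Icc {a : Fin n → ℤ} {b : Fin r → Fin n → ℤ} (ha : ∀ i, a i = 0 ∨ a i = 1)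
    (hb : ∀ j i, b j i = 0 ∨ b j i = 1) (i : Fin n) : addBinary a b i ∈ Icc 0 (2 ^ r) := by
  obtain ⟨h0, h1⟩ := sum_two_pow_mul_bounds fun j => hb j i
  rw [addBinary_apply, mem_Icc]
  rcases ha i with h | h <;> rw [h] <;> constructor <;> linarith

lemma addBinary_inj {w a a' : Fin n → ℤ} {b b' : Fin r → Fin n → ℤ} {τ : ℤ}
    (hb : ∀ j i, b j i = 0 ∨ b j i = 1) (hb' : ∀ j i, b' j i = 0 ∨ b' j i = 1)
    (hbτ : ∀ j, w ⬝ᵥ b j = τ) (hbτ' : ∀ j, w ⬝ᵥ b' j = τ)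
    (hw : w ⬝ᵥ a = w ⬝ᵥ a' → a = a') (h : addBinary a b = addBinary a' b') :
    a = a' ∧ b = b' := by
  have hdot := congrArg (w ⬝ᵥ ·) h
  simp only [dotProduct_addBinary, hbτ, hbτ', add_left_inj] at hdot
  obtain rfl := hw hdot
  refine ⟨rfl, funext fun j => funext fun i => ?_⟩
  have hi := congrFun h i
  rw [addBinary_apply, addBinary_apply, add_right_inj] at hi
  exact congrFun (sum_two_pow_mul_injective (fun j => hb j i) (fun j => hb' j i) hi) j

theorem card_mul_card_pow_le (w : Fin n → ℤ) (τ : ℤ) {A B : Finset (Fin n → ℤ)}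
    (hA01 : ∀ a ∈ A, ∀ i, a i = 0 ∨ a i = 1) (hB01 : ∀ b ∈ B, ∀ i, b i = 0 ∨ b i = 1)
    (hB : ∀ b ∈ B, w ⬝ᵥ b = τ) (hA : ∀ a ∈ A, ∀ a' ∈ A, w ⬝ᵥ a = w ⬝ᵥ a' → a = a') :
    #A * #B ^ r ≤ (2 ^ r + 1) ^ n := by
  have hmaps : Set.MapsTo (Function.uncurry (@addBinary r n))
      (A ×ˢ Fintype.piFinset fun _ : Fin r => B : Finset _)
      (Fintype.piFinset fun _ : Fin n => Icc (0 : ℤ) (2 ^ r) : Finset _) := by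
    rintro ⟨a, b⟩ hp
    simp only [coe_product, Set.mem_prod, mem_coe, Fintype.mem_piFinset] at hp
    simpa only [mem_coe, Fintype.mem_piFinset, Function.uncurry_apply_pair] using
      addBinary_mem_Icc (hA01 a hp.1) fun j => hB01 _ (hp.2 j)
  have hinj : Set.InjOn (Function.uncurry (@addBinary r n))
      (A ×ˢ Fintype.piFinset fun _ : Fin r => B : Finset _) := by
    rintro ⟨a, b⟩ hp ⟨a', b'⟩ hp' h
    simp only [coe_product, Set.mem_prod, mem_coe, Fintype.mem_piFinset] at hp hp'
    exact Prod.ext_iff.2 <| addBinary_inj (fun j => hB01 _ (hp.2 j)) (fun j => hB01 _ (hp'.2 j))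
      (fun j => hB _ (hp.2 j)) (fun j => hB _ (hp'.2 j)) (hA a hp.1 a' hp'.1) h
  have hbox : #(Icc (0 : ℤ) (2 ^ r)) = 2 ^ r + 1 := by
    rw [Int.card_Icc, sub_zero]
    exact_mod_cast Int.toNat_natCast (2 ^ r + 1)
  simpa [card_product, Fintype.card_piFinset, hbox] using card_le_card_of_injOn _ hmaps hinj

end BinaryExpansion

lemma one_add_le_two_rpow {x : ℝ} (hx : 0 ≤ x) : 1 + x ≤ 2 ^ (2 * x) := by
  rw [rpow_def_of_pos two_pos]
  calc 1 + x ≤ exp x := by linarith [add_one_le_exp x]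
    _ ≤ exp (log 2 * (2 * x)) := exp_le_exp.2 (by nlinarith [log_two_gt_d9])

lemma le_two_rpow_of_mul_pow_le {a b ε : ℝ} {r n : ℕ} (ha : 0 ≤ a)
    (hb : 2 ^ ((1 - ε) * n) ≤ b) (h : a * b ^ r ≤ (2 ^ r + 1) ^ n) :
    a ≤ 2 ^ ((ε * r + 2 * (2 ^ r)⁻¹) * n) := by
  have hbase : (2 : ℝ) ^ r + 1 ≤ 2 ^ (r + 2 * ((2 : ℝ) ^ r)⁻¹ : ℝ) := by
    rw [rpow_add two_pos, rpow_natCast]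
    calc (2 : ℝ) ^ r + 1 = 2 ^ r * (1 + (2 ^ r)⁻¹) := by field_simp
      _ ≤ 2 ^ r * 2 ^ (2 * ((2 : ℝ) ^ r)⁻¹) :=
        mul_le_mul_of_nonneg_left (one_add_le_two_rpow (by positivity)) (by positivity)
  have hpos : (0 : ℝ) < 2 ^ ((1 - ε) * n * r) := by positivity
  refine le_of_mul_le_mul_right ?_ hpos
  calc a * 2 ^ ((1 - ε) * n * r) = a * (2 ^ ((1 - ε) * n)) ^ r := by
        rw [rpow_mul_natCast two_pos.le]
    _ ≤ a * b ^ r := by gcongr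
    _ ≤ (2 ^ r + 1) ^ n := h
    _ ≤ (2 ^ (r + 2 * ((2 : ℝ) ^ r)⁻¹ : ℝ)) ^ n := by gcongr
    _ = 2 ^ ((ε * r + 2 * (2 ^ r)⁻¹) * n) * 2 ^ ((1 - ε) * n * r) := by
        rw [← rpow_mul_natCast two_pos.le, ← rpow_add two_pos]
        ring_nf

lemma mul_add_three_le_two_rpow {t : ℝ} (ht : 3 ≤ t) : (t + 3) * t ≤ 10 * 2 ^ t := by
  have hexp : (log 2 * t) ^ 2 / 2 ≤ 2 ^ t := by
    rw [rpow_def_of_pos two_pos]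
    have := quadratic_le_exp_of_nonneg (x := log 2 * t) (by positivity)
    nlinarith [log_two_gt_d9]
  have hlog : 0.48 ≤ log 2 ^ 2 := by nlinarith [log_two_gt_d9]
  have : 0.48 * t ^ 2 ≤ (log 2 * t) ^ 2 := by
    rw [mul_pow]; exact mul_le_mul_of_nonneg_right hlog (sq_nonneg t)
  nlinarith

lemma two_rpow_inv_mul_le {t : ℝ} (ht : 3 ≤ t) :
    (2 ^ t)⁻¹ * (t + 3) ≤ 10 * logb 2 t / √t := by
  have hsqrt : √t ≤ t := by
    rw [sqrt_le_left (by linarith)]; nlinarith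
  have hlogb : 1 ≤ logb 2 t := by
    rw [le_logb_iff_rpow_le one_lt_two (by linarith), rpow_one]; linarith
  rw [le_div_iff₀ (sqrt_pos.2 (by linarith)), inv_mul_eq_div, div_mul_eq_mul_div,
    div_le_iff₀ (by positivity)]
  calc (t + 3) * √t ≤ (t + 3) * t := by gcongr
    _ ≤ 10 * 2 ^ t := mul_add_three_le_two_rpow ht
    _ ≤ 10 * logb 2 t * 2 ^ t := by gcongr; linarith

lemma mul_ceil_logb_add_le {ε : ℝ} (hε : 0 < ε) (hε1 : ε ≤ 1) :
    ε * ⌈logb 2 (1 / ε)⌉₊ + 2 * (2 ^ ⌈logb 2 (1 / ε)⌉₊)⁻¹ ≤ ε * (logb 2 (1 / ε) + 3) := by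
  set t := logb 2 (1 / ε)
  have ht : 0 ≤ t := logb_nonneg one_lt_two (by rw [le_div_iff₀ hε]; linarith)
  have hceil : (⌈t⌉₊ : ℝ) < t + 1 := Nat.ceil_lt_add_one ht
  have hinv : ((2 : ℝ) ^ ⌈t⌉₊)⁻¹ ≤ ε := by
    rw [inv_le_comm₀ (by positivity) hε, ← one_div, ← rpow_natCast]
    calc 1 / ε = 2 ^ t := (rpow_logb two_pos one_lt_two.ne' (by positivity)).symm
      _ ≤ 2 ^ (⌈t⌉₊ : ℝ) := rpow_le_rpow_of_exponent_le one_le_two (Nat.le_ceil t)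
  nlinarith

/-- Reformulation of the Littlewood–Offord theorem with two families
`A, B ⊆ {0,1}^n ⊆ ℤ^n`: if every `a ∈ A` has exactly `αn` ones, every `b ∈ B` has
`⟨w,b⟩ = τ`, the map `a ↦ ⟨w,a⟩` is injective on `A`, and `|B| ≥ 2^((1-ε)n)`, then
`|A| ≤ 2^(δn)` with `δ = C · log₂(log₂(1/ε)) / √(log₂(1/ε))`. -/
theorem stmt_1 :
    ∃ C : ℝ, 0 < C ∧ ∃ ε₀ : ℝ, 0 < ε₀ ∧ ε₀ < 1/4 ∧
      ∀ ε : ℝ, 0 < ε → ε < ε₀ →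
      ∀ n : ℕ, 1 ≤ n → ∀ w : Fin n → ℤ, ∀ τ : ℤ, ∀ α : ℝ, 0 ≤ α → α ≤ 1 →
      ∀ A B : Finset (Fin n → ℤ),
        (∀ a ∈ A, ∀ i, a i = 0 ∨ a i = 1) →
        (∀ b ∈ B, ∀ i, b i = 0 ∨ b i = 1) →
        (∀ a ∈ A, ((Finset.univ.filter (fun i => a i = 1)).card : ℝ) = α * n) →
        (∀ b ∈ B, ∑ i, w i * b i = τ) →
        (∀ a ∈ A, ∀ a' ∈ A, ∑ i, w i * a i = ∑ i, w i * a' i → a = a') →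
        (2:ℝ) ^ ((1 - ε) * (n:ℝ)) ≤ (B.card : ℝ) →
        (A.card : ℝ) ≤ (2:ℝ) ^ ((C * Real.logb 2 (Real.logb 2 (1/ε)) /
          Real.sqrt (Real.logb 2 (1/ε))) * (n:ℝ)) := by
  refine ⟨10, by norm_num, 1 / 8, by norm_num, by norm_num, ?_⟩
  intro ε hε hε8 n _ w τ α _ _ A B hA01 hB01 _ hB hA hBcard
  set t := logb 2 (1 / ε)
  have ht : 3 ≤ t := by
    rw [le_logb_iff_rpow_le one_lt_two (by positivity), le_div_iff₀ hε]; norm_num; linarith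
  have hε_eq : ε = (2 ^ t)⁻¹ := by
    rw [rpow_logb two_pos one_lt_two.ne' (by positivity), one_div, inv_inv]
  have hcount : (#A * #B ^ ⌈t⌉₊ : ℝ) ≤ (2 ^ ⌈t⌉₊ + 1) ^ n := by
    exact_mod_cast card_mul_card_pow_le w τ hA01 hB01 hB hA
  refine (le_two_rpow_of_mul_pow_le (Nat.cast_nonneg _) hBcard hcount).trans
    (rpow_le_rpow_of_exponent_le one_le_two (mul_le_mul_of_nonneg_right ?_ n.cast_nonneg))
  calc ε * ⌈t⌉₊ + 2 * (2 ^ ⌈t⌉₊)⁻¹ ≤ ε * (t + 3) := mul_ceil_logb_add_le hε (by linarith)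
    _ = (2 ^ t)⁻¹ * (t + 3) := by rw [hε_eq]
    _ ≤ 10 * logb 2 t / √t := two_rpow_inv_mul_le ht
end

section
/- Let Ω be a finite nonempty set, p : Ω → [0,1] with Σ_{ω∈Ω} p(ω) = 1, let γ ∈ (0, 1/4], and let U be a finite nonempty set. Then the number of vectors v ∈ Ω^U that are γ-p-balanced for U is at most |U|^{|Ω|} · 2^{(h(p) + |Ω|·γ·log₂(1/γ))·|U|}. -/
/-!
Group the balanced vectors by their histogram `k : Ω → ℕ`. Each value `k ω` lies in an interval
of length `2γ|U| < |U|`, so at most `|U|^|Ω|` histograms occur. Weighting `v` by `∏ i, q (v i)`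
with `q = k / |U|` (total mass `1`) shows that at most `exp (|U| ∑ ω, negMulLog (q ω))` vectors
have histogram `k`. For balanced `k` we have `|q ω - p ω| ≤ γ ≤ 1/e`, and then
`negMulLog (q ω) ≤ negMulLog (p ω) + negMulLog γ`, which is the claimed bound in base `e`.
-/

/-- `Real.logb 2 0 = 0`, so the convention `0·log₂ 0 = 0` holds automatically. -/
noncomputable def entropy {Ω : Type*} [Fintype Ω] (p : Ω → ℝ) : ℝ :=
  -∑ ω, p ω * Real.logb 2 (p ω)

open Real

namespace Real

lemma negMulLog_add_le {a b : ℝ} (ha : 0 ≤ a) (hb : 0 ≤ b) :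
    negMulLog (a + b) ≤ negMulLog a + negMulLog b := by
  rcases ha.eq_or_lt with rfl | ha
  · simp
  rcases hb.eq_or_lt with rfl | hb
  · simp
  have hla : log a ≤ log (a + b) := log_le_log ha (by linarith)
  have hlb : log b ≤ log (a + b) := log_le_log hb (by linarith)
  simp only [negMulLog, neg_mul]
  nlinarith [mul_le_mul_of_nonneg_left hla ha.le, mul_le_mul_of_nonneg_left hlb hb.le]

lemma monotoneOn_negMulLog : MonotoneOn negMulLog (Set.Icc 0 (exp (-1))) := by
  refine monotoneOn_of_deriv_nonneg (convex_Icc _ _) continuous_negMulLog.continuousOn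
    (differentiableOn_negMulLog.mono fun x hx => ?_) fun x hx => ?_
  · rw [interior_Icc] at hx; exact hx.1.ne'
  · rw [interior_Icc] at hx
    rw [deriv_negMulLog hx.1.ne']
    linarith [(log_le_iff_le_exp hx.1).2 hx.2.le]

lemma monotoneOn_negMulLog_add_self : MonotoneOn (fun x => negMulLog x + x) (Set.Icc 0 1) := by
  have hderiv {x : ℝ} (hx : x ≠ 0) : HasDerivAt (fun y => negMulLog y + y) (-log x - 1 + 1) x :=
    (hasDerivAt_negMulLog hx).add (hasDerivAt_id' x)
  refine monotoneOn_of_deriv_nonneg (convex_Icc _ _)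
    (continuous_negMulLog.add continuous_id).continuousOn
    (fun x hx => ?_) fun x hx => ?_ <;> rw [interior_Icc] at hx
  · exact (hderiv hx.1.ne').differentiableAt.differentiableWithinAt
  · rw [(hderiv hx.1.ne').deriv]
    linarith [log_nonpos hx.1.le hx.2.le]

lemma self_le_negMulLog {x : ℝ} (h0 : 0 ≤ x) (h1 : x ≤ exp (-1)) : x ≤ negMulLog x := by
  rcases h0.eq_or_lt with rfl | h0
  · simp
  have := (log_le_iff_le_exp h0).2 h1
  simp only [negMulLog, neg_mul]
  nlinarith

lemma negMulLog_le_add_negMulLog_of_abs_sub_le {p q γ : ℝ} (hp0 : 0 ≤ p) (hp1 : p ≤ 1)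
    (hq : 0 ≤ q) (hγ : γ ≤ exp (-1)) (hqp : |q - p| ≤ γ) :
    negMulLog q ≤ negMulLog p + negMulLog γ := by
  obtain ⟨hlo, hhi⟩ := abs_sub_le_iff.1 hqp
  rcases le_total q p with hqp | hpq
  · have hmono : negMulLog q + q ≤ negMulLog p + p :=
      monotoneOn_negMulLog_add_self ⟨hq, hqp.trans hp1⟩ ⟨hp0, hp1⟩ hqp
    linarith [self_le_negMulLog (by linarith) hγ]
  · calc negMulLog q = negMulLog (p + (q - p)) := by rw [add_sub_cancel]
      _ ≤ negMulLog p + negMulLog (q - p) := negMulLog_add_le hp0 (by linarith)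
      _ ≤ negMulLog p + negMulLog γ := by
        gcongr
        exact monotoneOn_negMulLog ⟨by linarith, by linarith⟩ ⟨by linarith, hγ⟩ hlo

end Real

open Finset

lemma Finset.card_le_card_image_mul {α β : Type*} [DecidableEq β] {s : Finset α} (f : α → β)
    {M : ℝ} (h : ∀ a ∈ s, (#{x ∈ s | f x = f a} : ℝ) ≤ M) : (#s : ℝ) ≤ #(s.image f) * M := by
  rw [card_eq_sum_card_image f s, Nat.cast_sum, ← nsmul_eq_mul, ← sum_const]
  refine sum_le_sum fun b hb => ?_
  obtain ⟨a, ha, rfl⟩ := mem_image.1 hb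
  exact h a ha

lemma Nat.card_Icc_ceil_floor_le {x y : ℝ} {n : ℕ} (hy : 0 ≤ y) (hxy : y < x + n) :
    #(Icc ⌈x⌉₊ ⌊y⌋₊) ≤ n := by
  have : (⌊y⌋₊ : ℝ) < ⌈x⌉₊ + n :=
    calc (⌊y⌋₊ : ℝ) ≤ y := Nat.floor_le hy
      _ < x + n := hxy
      _ ≤ ⌈x⌉₊ + n := by gcongr; exact Nat.le_ceil x
  have : ⌊y⌋₊ < ⌈x⌉₊ + n := by exact_mod_cast this
  rw [Nat.card_Icc]
  omega

section Histogram

variable {Ω U : Type*} [Fintype Ω] [DecidableEq Ω] [Fintype U]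

def histogram (v : U → Ω) (ω : Ω) : ℕ := #{i | v i = ω}

lemma sum_histogram (v : U → Ω) : ∑ ω, histogram v ω = Fintype.card U :=
  (card_eq_sum_card_fiberwise fun i _ => mem_univ (v i)).symm

lemma prod_comp_eq_prod_pow_histogram {M : Type*} [CommMonoid M] (f : Ω → M) (v : U → Ω) :
    ∏ i, f (v i) = ∏ ω, f ω ^ histogram v ω := by
  simp only [← prod_fiberwise' univ v f, prod_const]
  rfl

lemma div_pow_self_eq_exp {k n : ℕ} (hkn : k ≤ n) :
    ((k : ℝ) / n) ^ k = exp (-(n * negMulLog (k / n))) := by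
  rcases k.eq_zero_or_pos with rfl | hk
  · simp
  have hn : (0 : ℝ) < n := by exact_mod_cast hk.trans_le hkn
  have hq : (0 : ℝ) < k / n := by positivity
  rw [negMulLog, ← rpow_natCast, rpow_def_of_pos hq]
  congr 1
  field_simp

variable [DecidableEq U]

/-- Weighting each `v` by `∏ i, q (v i)` with `q = k / |U|` gives total mass `1`, and every `v`
with histogram `k` has the same weight `exp (-|U| * ∑ ω, negMulLog (q ω))`. -/
lemma card_histogram_eq_le (k : Ω → ℕ) :
    (#{v : U → Ω | histogram v = k} : ℝ) ≤
      exp (Fintype.card U * ∑ ω, negMulLog (k ω / Fintype.card U)) := by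
  set n := Fintype.card U
  set H := ∑ ω, negMulLog (k ω / n)
  obtain hempty | ⟨v₀, hv₀⟩ :=
    (filter (fun v : U → Ω => histogram v = k) univ).eq_empty_or_nonempty
  · rw [hempty, card_empty, Nat.cast_zero]
    positivity
  replace hv₀ : histogram v₀ = k := (mem_filter.1 hv₀).2
  set q : Ω → ℝ := fun ω => k ω / n
  have hweight (v : U → Ω) (hv : histogram v = k) : ∏ i, q (v i) = exp (-(n * H)) := by
    rw [prod_comp_eq_prod_pow_histogram, hv, mul_sum, ← sum_neg_distrib, exp_sum]
    exact prod_congr rfl fun ω _ => div_pow_self_eq_exp (hv₀ ▸ card_le_univ _)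
  have htotal : ∑ v : U → Ω, ∏ i, q (v i) = 1 := by
    rw [← Fintype.prod_sum, prod_const, card_univ]
    change (∑ ω, q ω) ^ n = 1
    rcases eq_or_ne n 0 with hn | hn
    · rw [hn, pow_zero]
    · rw [← sum_div, ← Nat.cast_sum, ← hv₀, sum_histogram, div_self (by exact_mod_cast hn),
        one_pow]
  calc (#{v : U → Ω | histogram v = k} : ℝ)
      = (∑ v with histogram v = k, ∏ i, q (v i)) * exp (n * H) := by
        rw [sum_congr rfl fun v hv => hweight v (mem_filter.1 hv).2, sum_const, nsmul_eq_mul,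
          mul_assoc, ← exp_add, neg_add_cancel, exp_zero, mul_one]
    _ ≤ (∑ v : U → Ω, ∏ i, q (v i)) * exp (n * H) := by
        gcongr
        exact subset_univ _
    _ = exp (n * H) := by rw [htotal, one_mul]

end Histogram

section Balanced

variable {Ω : Type*} [Fintype Ω]

def IsBalanced (p : Ω → ℝ) (γ : ℝ) (n : ℕ) (k : Ω → ℕ) : Prop :=
  ∀ ω, (p ω - γ) * n ≤ k ω ∧ (k ω : ℝ) ≤ (p ω + γ) * n

variable {p : Ω → ℝ} {γ : ℝ} {n : ℕ} {k : Ω → ℕ}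

lemma IsBalanced.sum_negMulLog_le (hk : IsBalanced p γ n k) (hn : 0 < n)
    (hp0 : ∀ ω, 0 ≤ p ω) (hp1 : ∀ ω, p ω ≤ 1) (hγ : γ ≤ exp (-1)) :
    ∑ ω, negMulLog (k ω / n) ≤ ∑ ω, (negMulLog (p ω) + negMulLog γ) := by
  have hn' : (0 : ℝ) < n := by exact_mod_cast hn
  refine sum_le_sum fun ω _ => negMulLog_le_add_negMulLog_of_abs_sub_le (hp0 ω) (hp1 ω)
    (by positivity) hγ (abs_sub_le_iff.2 ⟨?_, ?_⟩)
  · linarith [(div_le_iff₀ hn').2 (hk ω).2]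
  · linarith [(le_div_iff₀ hn').2 (hk ω).1]

lemma IsBalanced.mem_piFinset [DecidableEq Ω] (hk : IsBalanced p γ n k) :
    k ∈ Fintype.piFinset fun ω => Icc ⌈(p ω - γ) * n⌉₊ ⌊(p ω + γ) * n⌋₊ :=
  Fintype.mem_piFinset.2 fun ω =>
    mem_Icc.2 ⟨Nat.ceil_le.2 (hk ω).1, Nat.le_floor (hk ω).2⟩

lemma card_piFinset_balanced_le [DecidableEq Ω] (hn : 0 < n) (hp0 : ∀ ω, 0 ≤ p ω) (hγ0 : 0 ≤ γ)
    (hγ : γ < 1 / 2) :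
    #(Fintype.piFinset fun ω => Icc ⌈(p ω - γ) * n⌉₊ ⌊(p ω + γ) * n⌋₊) ≤ n ^ Fintype.card Ω := by
  rw [Fintype.card_piFinset, ← card_univ, ← prod_const]
  refine prod_le_prod' fun ω _ => Nat.card_Icc_ceil_floor_le
    (mul_nonneg (add_nonneg (hp0 ω) hγ0) n.cast_nonneg) ?_
  have hn' : (0 : ℝ) < n := by exact_mod_cast hn
  nlinarith

end Balanced

lemma two_rpow_entropy_add {Ω : Type*} [Fintype Ω] (p : Ω → ℝ) (γ x : ℝ) :
    (2 : ℝ) ^ ((entropy p + Fintype.card Ω * γ * logb 2 (1 / γ)) * x) =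
      exp (x * ∑ ω, (negMulLog (p ω) + negMulLog γ)) := by
  rw [rpow_def_of_pos two_pos]
  congr 1
  have hlog2 : log 2 ≠ 0 := (log_pos one_lt_two).ne'
  simp only [entropy, negMulLog, logb, one_div, log_inv, sum_add_distrib, sum_const, card_univ,
    nsmul_eq_mul, neg_mul, sum_neg_distrib, ← sum_div, mul_div_assoc']
  field_simp

theorem stmt_3_general (Ω : Type*) [Fintype Ω] [DecidableEq Ω]
    (U : Type*) [Fintype U] [Nonempty U]
    (p : Ω → ℝ) (hp0 : ∀ ω, 0 ≤ p ω) (hp1 : ∀ ω, p ω ≤ 1)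
    (γ : ℝ) (hγ0 : 0 < γ) (hγ1 : γ ≤ 1/4) :
    (Nat.card {v : U → Ω // ∀ ω : Ω,
        (p ω - γ) * (Fintype.card U : ℝ) ≤
          ((Finset.univ.filter (fun i : U => v i = ω)).card : ℝ) ∧
        ((Finset.univ.filter (fun i : U => v i = ω)).card : ℝ) ≤
          (p ω + γ) * (Fintype.card U : ℝ)} : ℝ) ≤
      (Fintype.card U : ℝ) ^ (Fintype.card Ω) *
        (2:ℝ) ^ ((entropy p + (Fintype.card Ω : ℝ) * γ * Real.logb 2 (1/γ)) *
          (Fintype.card U : ℝ)) := by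
  classical
  set n := Fintype.card U
  have hn : 0 < n := Fintype.card_pos
  have hγ : γ ≤ exp (-1) := hγ1.trans <| by
    rw [exp_neg, one_div]
    exact inv_anti₀ (exp_pos 1) (by linarith [exp_one_lt_d9])
  set B : Finset (U → Ω) := {v | IsBalanced p γ n (histogram v)}
  set M := exp (n * ∑ ω, (negMulLog (p ω) + negMulLog γ))
  have hfiber (v : U → Ω) (hv : v ∈ B) : (#{w ∈ B | histogram w = histogram v} : ℝ) ≤ M :=
    calc (#{w ∈ B | histogram w = histogram v} : ℝ)
        ≤ #{w : U → Ω | histogram w = histogram v} := by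
          gcongr; exact subset_univ _
      _ ≤ exp (n * ∑ ω, negMulLog (histogram v ω / n)) := card_histogram_eq_le _
      _ ≤ M := exp_le_exp.2 <| mul_le_mul_of_nonneg_left
          ((mem_filter.1 hv).2.sum_negMulLog_le hn hp0 hp1 hγ) n.cast_nonneg
  have himage : #(B.image histogram) ≤ n ^ Fintype.card Ω :=
    (card_le_card fun k hk => by
      obtain ⟨v, hv, rfl⟩ := mem_image.1 hk
      exact (mem_filter.1 hv).2.mem_piFinset).trans
    (card_piFinset_balanced_le hn hp0 hγ0.le (by linarith))
  calc (Nat.card {v : U → Ω // IsBalanced p γ n (histogram v)} : ℝ)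
      = #B := by rw [Nat.card_eq_fintype_card, Fintype.card_subtype]
    _ ≤ #(B.image histogram) * M := card_le_card_image_mul histogram hfiber
    _ ≤ n ^ Fintype.card Ω * M := by gcongr; exact_mod_cast himage
    _ = _ := by rw [two_rpow_entropy_add]

/-- For a finite nonempty `Ω`, probability function `p`, `γ ∈ (0,1/4]`, and
finite nonempty index set `U`, the number of `γ`-`p`-balanced vectors `v ∈ Ω^U` is at most
`|U|^{|Ω|} · 2^{(h(p) + |Ω|·γ·log₂(1/γ))·|U|}`. -/
theorem stmt_3 (Ω : Type*) [Fintype Ω] [DecidableEq Ω] [Nonempty Ω]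
    (U : Type*) [Fintype U] [DecidableEq U] [Nonempty U]
    (p : Ω → ℝ) (hp0 : ∀ ω, 0 ≤ p ω) (hp1 : ∀ ω, p ω ≤ 1)
    (hpsum : ∑ ω, p ω = 1) (γ : ℝ) (hγ0 : 0 < γ) (hγ1 : γ ≤ 1/4) :
    (Nat.card {v : U → Ω // ∀ ω : Ω,
        (p ω - γ) * (Fintype.card U : ℝ) ≤
          ((Finset.univ.filter (fun i : U => v i = ω)).card : ℝ) ∧
        ((Finset.univ.filter (fun i : U => v i = ω)).card : ℝ) ≤
          (p ω + γ) * (Fintype.card U : ℝ)} : ℝ) ≤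
      (Fintype.card U : ℝ) ^ (Fintype.card Ω) *
        (2:ℝ) ^ ((entropy p + (Fintype.card Ω : ℝ) * γ * Real.logb 2 (1/γ)) *
          (Fintype.card U : ℝ)) :=
  stmt_3_general Ω U p hp0 hp1 γ hγ0 hγ1
end

section
/- Let n ≥ 1 and let w : {1,…,n} → ℕ with max_i w(i) ≥ 1. Set l := 1 + ⌈log₂(max_i w(i))⌉ and, for s ∈ {0,…,l}, define the s-pruned weights w_s(i) := ⌊w(i)/2^{l−s}⌋. Then for every s ∈ {1,…,l}: (1/(3n))·|w_s(2^{[n]})| ≤ |w_{s−1}(2^{[n]})| ≤ (3n/2)·|w_s(2^{[n]})|. -/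
/-!
Halving every weight moves each subset sum `f X = ∑ i ∈ X, v i` to `g X = ∑ i ∈ X, v i / 2`
with `2 g X ≤ f X ≤ 2 g X + n`. Hence the subsets with a given value of `g` take at most `n + 1` values of `f`,
and vice versa at most `n / 2 + 1`, which bounds each number of distinct
subset sums by a multiple of the other. Passing from `w_s` to `w_{s-1}` is exactly such a halving.
-/

open Finset

theorem Finset.card_image_le_mul_card_image_of_fibers {α β γ : Type*} [DecidableEq β]
    [DecidableEq γ] (s : Finset α) (f : α → β) (g : α → γ) (k : ℕ)
    (hk : ∀ c, #((s.filter (g · = c)).image f) ≤ k) :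
    #(s.image f) ≤ k * #(s.image g) := by
  have hcover : s.image f ⊆ (s.image g).biUnion fun c => (s.filter (g · = c)).image f := by
    intro b hb
    obtain ⟨a, ha, rfl⟩ := mem_image.mp hb
    exact mem_biUnion.mpr ⟨g a, mem_image_of_mem g ha,
      mem_image_of_mem f (mem_filter.mpr ⟨ha, rfl⟩)⟩
  calc #(s.image f) ≤ ∑ c ∈ s.image g, #((s.filter (g · = c)).image f) :=
        (card_le_card hcover).trans card_biUnion_le
    _ ≤ k * #(s.image g) := by
        rw [mul_comm]
        exact sum_le_card_nsmul _ _ _ fun c _ => hk c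

section SubsetSums

variable {ι : Type*}

theorem two_mul_sum_div_two_le (v : ι → ℕ) (X : Finset ι) :
    2 * ∑ i ∈ X, v i / 2 ≤ ∑ i ∈ X, v i := by
  rw [mul_sum]
  exact sum_le_sum fun i _ => Nat.mul_div_le (v i) 2

theorem sum_le_two_mul_sum_div_two_add_card (v : ι → ℕ) (X : Finset ι) :
    ∑ i ∈ X, v i ≤ 2 * ∑ i ∈ X, v i / 2 + #X :=
  calc ∑ i ∈ X, v i ≤ ∑ i ∈ X, (2 * (v i / 2) + 1) := sum_le_sum fun i _ => by omega
    _ = 2 * ∑ i ∈ X, v i / 2 + #X := by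
        rw [sum_add_distrib, mul_sum, sum_const, smul_eq_mul, mul_one]

variable [Fintype ι]

def subsetSums (v : ι → ℕ) : Finset ℕ :=
  (univ : Finset (Finset ι)).image fun X => ∑ i ∈ X, v i

theorem card_subsetSums_le_mul_card_subsetSums_div_two (v : ι → ℕ) :
    #(subsetSums v) ≤ (Fintype.card ι + 1) * #(subsetSums (v · / 2)) := by
  refine card_image_le_mul_card_image_of_fibers _ _ _ _ fun c => ?_
  calc #(((univ : Finset (Finset ι)).filter (fun X => ∑ i ∈ X, v i / 2 = c)).image
          fun X => ∑ i ∈ X, v i)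
      ≤ #(Icc (2 * c) (2 * c + Fintype.card ι)) := by
        refine card_le_card fun a ha => ?_
        obtain ⟨X, hX, rfl⟩ := mem_image.mp ha
        have hc := (mem_filter.mp hX).2
        have hlo := two_mul_sum_div_two_le v X
        have hhi := sum_le_two_mul_sum_div_two_add_card v X
        have hX := card_le_univ X
        rw [mem_Icc]
        omega
    _ = Fintype.card ι + 1 := by rw [Nat.card_Icc]; omega

theorem card_subsetSums_div_two_le_mul_card_subsetSums (v : ι → ℕ) :
    #(subsetSums (v · / 2)) ≤ (Fintype.card ι / 2 + 1) * #(subsetSums v) := by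
  refine card_image_le_mul_card_image_of_fibers _ _ _ _ fun a => ?_
  calc #(((univ : Finset (Finset ι)).filter (fun X => ∑ i ∈ X, v i = a)).image
          fun X => ∑ i ∈ X, v i / 2)
      ≤ #(Icc ((a - Fintype.card ι + 1) / 2) (a / 2)) := by
        refine card_le_card fun c hc => ?_
        obtain ⟨X, hX, rfl⟩ := mem_image.mp hc
        have ha := (mem_filter.mp hX).2
        have hlo := two_mul_sum_div_two_le v X
        have hhi := sum_le_two_mul_sum_div_two_add_card v X
        have hX := card_le_univ X
        rw [mem_Icc]
        omega
    _ ≤ Fintype.card ι / 2 + 1 := by rw [Nat.card_Icc]; omega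

end SubsetSums

theorem div_two_pow_sub_pred {l s : ℕ} (hs1 : 1 ≤ s) (hsl : s ≤ l) (a : ℕ) :
    a / 2 ^ (l - (s - 1)) = a / 2 ^ (l - s) / 2 := by
  rw [show l - (s - 1) = l - s + 1 by omega, pow_succ, Nat.div_div_eq_div_mul]

theorem stmt_14_general (n : ℕ) (hn : 1 ≤ n) (w : Fin n → ℕ)
    (l : ℕ)
    (s : ℕ) (hs1 : 1 ≤ s) (hsl : s ≤ l) :
    (1 / (3 * (n:ℝ))) *
        (((Finset.univ : Finset (Finset (Fin n))).image
          (fun X => ∑ i ∈ X, w i / 2^(l - s))).card : ℝ) ≤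
      (((Finset.univ : Finset (Finset (Fin n))).image
          (fun X => ∑ i ∈ X, w i / 2^(l - (s-1)))).card : ℝ) ∧
    (((Finset.univ : Finset (Finset (Fin n))).image
          (fun X => ∑ i ∈ X, w i / 2^(l - (s-1)))).card : ℝ) ≤
      (3 * (n:ℝ) / 2) *
        (((Finset.univ : Finset (Finset (Fin n))).image
          (fun X => ∑ i ∈ X, w i / 2^(l - s))).card : ℝ) := by
  simp only [div_two_pow_sub_pred hs1 hsl]
  set v : Fin n → ℕ := fun i => w i / 2 ^ (l - s)
  change (1 / (3 * (n:ℝ))) * #(subsetSums v) ≤ #(subsetSums (v · / 2)) ∧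
    (#(subsetSums (v · / 2)) : ℝ) ≤ (3 * (n:ℝ) / 2) * #(subsetSums v)
  have h1 := card_subsetSums_le_mul_card_subsetSums_div_two v
  have h2 := card_subsetSums_div_two_le_mul_card_subsetSums v
  rw [Fintype.card_fin] at h1 h2
  have hA : #(subsetSums v) ≤ 3 * n * #(subsetSums (v · / 2)) :=
    h1.trans (Nat.mul_le_mul_right _ (by omega))
  have hB : 2 * #(subsetSums (v · / 2)) ≤ 3 * n * #(subsetSums v) :=
    calc 2 * #(subsetSums (v · / 2)) ≤ 2 * (n / 2 + 1) * #(subsetSums v) := by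
          rw [mul_assoc]; exact Nat.mul_le_mul_left 2 h2
      _ ≤ 3 * n * #(subsetSums v) := Nat.mul_le_mul_right _ (by omega)
  have hn' : (0 : ℝ) < n := by exact_mod_cast hn
  constructor
  · rw [one_div_mul_eq_div, div_le_iff₀ (by positivity), mul_comm]
    exact_mod_cast hA
  · rw [div_mul_eq_mul_div, le_div_iff₀ two_pos, mul_comm]
    exact_mod_cast hB

/-- Let `w : {1,…,n} → ℕ` with `max_i w(i) ≥ 1`, let
`l := 1 + ⌈log₂(max_i w(i))⌉`, and for `s ∈ {0,…,l}` let `w_s(i) := ⌊w(i)/2^{l−s}⌋` be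
the `s`-pruned weights. Then for every `s ∈ {1,…,l}` the numbers of distinct subset sums
satisfy `(1/(3n))·|w_s(2^{[n]})| ≤ |w_{s−1}(2^{[n]})| ≤ (3n/2)·|w_s(2^{[n]})|`. -/
theorem stmt_14 (n : ℕ) (hn : 1 ≤ n) (w : Fin n → ℕ)
    (M : ℕ) (hM : M = Finset.univ.sup w) (hM1 : 1 ≤ M)
    (l : ℕ) (hl : l = 1 + Nat.clog 2 M)
    (s : ℕ) (hs1 : 1 ≤ s) (hsl : s ≤ l) :
    (1 / (3 * (n:ℝ))) *
        (((Finset.univ : Finset (Finset (Fin n))).image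
          (fun X => ∑ i ∈ X, w i / 2^(l - s))).card : ℝ) ≤
      (((Finset.univ : Finset (Finset (Fin n))).image
          (fun X => ∑ i ∈ X, w i / 2^(l - (s-1)))).card : ℝ) ∧
    (((Finset.univ : Finset (Finset (Fin n))).image
          (fun X => ∑ i ∈ X, w i / 2^(l - (s-1)))).card : ℝ) ≤
      (3 * (n:ℝ) / 2) *
        (((Finset.univ : Finset (Finset (Fin n))).image
          (fun X => ∑ i ∈ X, w i / 2^(l - s))).card : ℝ) :=
  stmt_14_general n hn w l s hs1 hsl
end

section
/- Let n ≥ 1, m ≥ 2, 0 < α < 1/(4m), and let S_1,…,S_m be a partition of {1,…,n} that is α-balanced. Let k ≠ k' be indices in {1,…,m} such that |S_k| and |S_{k'}| are the two largest cardinalities, i.e., |S_j| ≤ min{|S_k|, |S_{k'}|} for every j ∉ {k, k'}. Then either both |S_k| ∈ [n/2 − αn, n/2 + αn] and |S_{k'}| ∈ [n/2 − αn, n/2 + αn], or |S_j| ≤ (1/2 − 1/(4m))·n for every j ∈ {1,…,m}. -/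
/-!
Listing bin `i` first and bin `j` second, some prefix sum lies in the window
`[n/2 - αn, n/2 + αn]`; it is either `|S_i|` itself or at least `|S_i| + |S_j|`. Hence every bin
fits under `n/2 + αn`, and a bin below the window fits there together with any other bin.
A bin of size above `(1/2 - 1/(4m))n` that were below the window would force all other bins below
`n/(2m)`, too small to cover the rest of `{1,…,n}`. Once the largest bin is in the window, the
second largest, if below it, would be at most `2αn`, and so would all bins but the largest:
again too small to cover the rest.
-/

open Finset

theorem Equiv.Perm.exists_apply_eq_and_apply_eq {α : Type*} [DecidableEq α] {a b i j : α}
    (hab : a ≠ b) (hij : i ≠ j) : ∃ π : Equiv.Perm α, π a = i ∧ π b = j := by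
  have hja : Equiv.swap a i j ≠ a := by
    rw [Ne, Equiv.swap_apply_eq_iff, Equiv.swap_apply_left]; exact hij.symm
  refine ⟨(Equiv.swap b (Equiv.swap a i j)).trans (Equiv.swap a i), ?_, ?_⟩
  · simp [Equiv.swap_apply_of_ne_of_ne hab hja.symm]
  · simp

theorem Fin.sum_le_add_mul_of_forall_ne_le {m : ℕ} {s : Fin m → ℝ} (p : Fin m) {B : ℝ}
    (h : ∀ j ≠ p, s j ≤ B) : ∑ j, s j ≤ s p + (m - 1) * B := by
  rw [← add_sum_erase _ _ (mem_univ p)]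
  have := sum_le_card_nsmul (univ.erase p) s B fun j hj => h j (ne_of_mem_erase hj)
  rw [card_erase_of_mem (mem_univ p), card_univ, Fintype.card_fin, nsmul_eq_mul,
    Nat.cast_pred (Fin.pos p)] at this
  linarith

def PrefixBalanced {m : ℕ} (s : Fin m → ℝ) (I : Set ℝ) : Prop :=
  ∀ π : Equiv.Perm (Fin m), ∃ b : Fin m, ∑ j ∈ Iic b, s (π j) ∈ I

namespace PrefixBalanced

variable {m : ℕ} {s : Fin m → ℝ}

theorem exists_mem_eq_or_add_le {I : Set ℝ} (h : PrefixBalanced s I) (hs : 0 ≤ s) {i j : Fin m}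
    (hij : i ≠ j) : ∃ r ∈ I, r = s i ∨ s i + s j ≤ r := by
  obtain ⟨m, rfl⟩ : ∃ m', m = m' + 2 := ⟨m - 2, by have := Fin.val_ne_of_ne hij; omega⟩
  obtain ⟨π, hπ0, hπ1⟩ :=
    Equiv.Perm.exists_apply_eq_and_apply_eq (zero_ne_one' (Fin (m + 2))) hij
  obtain ⟨b, hb⟩ := h π
  refine ⟨_, hb, ?_⟩
  rcases Fin.eq_zero_or_eq_succ b with rfl | ⟨b, rfl⟩
  · left
    have : Iic (0 : Fin (m + 2)) = {0} := by ext y; simp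
    simp [this, hπ0]
  · right
    have hsub : ({0, 1} : Finset (Fin (m + 2))) ⊆ Iic b.succ := by
      intro y hy
      simp only [mem_insert, mem_singleton] at hy
      rcases hy with rfl | rfl <;> simp [Fin.le_def]
    calc s i + s j = ∑ y ∈ {0, 1}, s (π y) := by rw [sum_pair zero_ne_one, hπ0, hπ1]
      _ ≤ _ := sum_le_sum_of_subset_of_nonneg hsub fun y _ _ => hs _

variable {lo hi : ℝ}

theorem le_right (h : PrefixBalanced s (Set.Icc lo hi)) (hs : 0 ≤ s) (hm : 1 < m) (i : Fin m) :
    s i ≤ hi := by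
  obtain ⟨j, hji⟩ := Fintype.exists_ne_of_one_lt_card (by simpa using hm) i
  obtain ⟨r, ⟨-, hr⟩, hri | hri⟩ := h.exists_mem_eq_or_add_le hs hji.symm
  · exact hri ▸ hr
  · linarith [show (0 : ℝ) ≤ s j from hs j]

theorem add_le_right_of_lt_left (h : PrefixBalanced s (Set.Icc lo hi)) (hs : 0 ≤ s) {i j : Fin m}
    (hij : i ≠ j) (hilo : s i < lo) : s i + s j ≤ hi := by
  obtain ⟨r, hr, hri | hri⟩ := h.exists_mem_eq_or_add_le hs hij
  · linarith [hr.1]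
  · exact hri.trans hr.2

variable {n α : ℝ}

theorem left_le_of_half_sub_lt (h : PrefixBalanced s (Set.Icc (n / 2 - α * n) (n / 2 + α * n)))
    (hs : 0 ≤ s) (hm : 2 ≤ m) (hα : α < 1 / (4 * m)) (hn : n ≤ ∑ j, s j) {i : Fin m}
    (hi : (1 / 2 - 1 / (4 * m)) * n < s i) : n / 2 - α * n ≤ s i := by
  by_contra! hlt
  have hrest : ∀ j ≠ i, s j ≤ n / 2 + α * n - s i := fun j hj => by
    linarith [h.add_le_right_of_lt_left hs hj.symm hlt]
  have hsum := Fin.sum_le_add_mul_of_forall_ne_le i hrest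
  have hsi := h.le_right hs (by omega) i
  have hmR : (2 : ℝ) ≤ m := by exact_mod_cast hm
  have hcm : (m : ℝ) * (1 / (4 * m)) * n = n / 4 := by field_simp
  have hn0 : 0 < n := by nlinarith [show (0 : ℝ) ≤ s i from hs i]
  nlinarith [mul_le_mul_of_nonneg_left hi.le (by linarith : (0 : ℝ) ≤ m - 2),
    mul_le_mul_of_nonneg_left (mul_lt_mul_of_pos_right hα hn0).le
      (by linarith : (0 : ℝ) ≤ m - 1)]

theorem left_le_of_forall_ne_le (h : PrefixBalanced s (Set.Icc (n / 2 - α * n) (n / 2 + α * n)))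
    (hs : 0 ≤ s) (hα : α < 1 / (4 * m)) (hn : n ≤ ∑ j, s j) {p q : Fin m} (hpq : p ≠ q)
    (hp : n / 2 - α * n ≤ s p) (hq : ∀ j ≠ p, s j ≤ s q) : n / 2 - α * n ≤ s q := by
  by_contra! hlt
  have hm : 1 < m := by have := Fin.val_ne_of_ne hpq; omega
  have hsum := Fin.sum_le_add_mul_of_forall_ne_le p hq
  have hpq' := h.add_le_right_of_lt_left hs hpq.symm hlt
  have hsp := h.le_right hs hm p
  have hmR : (2 : ℝ) ≤ m := by exact_mod_cast hm
  have hα' : α * (4 * m) < 1 := by rwa [lt_div_iff₀ (by positivity)] at hα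
  have hn0 : 0 < n := by nlinarith [show (0 : ℝ) ≤ s q from hs q]
  have hq2 : s q ≤ 2 * (α * n) := by linarith
  have hαn : 0 ≤ α * n := by linarith [show (0 : ℝ) ≤ s q from hs q]
  nlinarith [mul_lt_mul_of_pos_right hα' hn0,
    mul_le_mul_of_nonneg_left hq2 (by linarith : (0 : ℝ) ≤ m - 1)]

end PrefixBalanced

theorem Fintype.card_le_sum_card_of_forall_exists_mem {ι α : Type*} [Fintype ι] [Fintype α]
    [DecidableEq α] {S : ι → Finset α} (h : ∀ x, ∃ i, x ∈ S i) :
    Fintype.card α ≤ ∑ i, #(S i) :=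
  calc Fintype.card α = #(univ : Finset α) := card_univ.symm
    _ ≤ #(univ.biUnion S) := card_le_card fun x _ => by simpa using h x
    _ ≤ ∑ i, #(S i) := card_biUnion_le

theorem stmt_15_general (n m : ℕ) (hm : 2 ≤ m) (α : ℝ)
    (hα1 : α < 1 / (4 * m))
    (S : Fin m → Finset (Fin n))
    (hcover : ∀ x : Fin n, ∃ i, x ∈ S i)
    (hbal : ∀ π : Equiv.Perm (Fin m), ∃ b : Fin m,
      (n:ℝ)/2 - α * n ≤ (∑ j ∈ Finset.Iic b, ((S (π j)).card : ℝ)) ∧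
      (∑ j ∈ Finset.Iic b, ((S (π j)).card : ℝ)) ≤ (n:ℝ)/2 + α * n)
    (k k' : Fin m) (hkk' : k ≠ k')
    (hmax : ∀ j, j ≠ k → j ≠ k' → (S j).card ≤ min (S k).card (S k').card) :
    (((n:ℝ)/2 - α * n ≤ ((S k).card : ℝ) ∧ ((S k).card : ℝ) ≤ (n:ℝ)/2 + α * n) ∧
     ((n:ℝ)/2 - α * n ≤ ((S k').card : ℝ) ∧ ((S k').card : ℝ) ≤ (n:ℝ)/2 + α * n)) ∨
    (∀ j, ((S j).card : ℝ) ≤ (1/2 - 1/(4 * (m:ℝ))) * n) := by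
  have hs : 0 ≤ fun i => ((S i).card : ℝ) := fun i => Nat.cast_nonneg _
  have hprefix : PrefixBalanced (fun i => ((S i).card : ℝ))
      (Set.Icc (n / 2 - α * n) (n / 2 + α * n)) := hbal
  have hn : (n : ℝ) ≤ ∑ i, ((S i).card : ℝ) := by
    exact_mod_cast (Fintype.card_fin n).symm.trans_le
      (Fintype.card_le_sum_card_of_forall_exists_mem hcover)
  obtain hsmall | ⟨j, hj⟩ :=
    forall_or_exists_not fun j => ((S j).card : ℝ) ≤ (1/2 - 1/(4 * (m:ℝ))) * n
  · exact Or.inr hsmall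
  refine Or.inl ?_
  wlog hle : (S k').card ≤ (S k).card generalizing k k'
  · exact (this k' k hkk'.symm (fun j h1 h2 => min_comm (S k).card _ ▸ hmax j h2 h1)
      (le_of_not_ge hle)).symm
  have hdom : ∀ i ≠ k, (S i).card ≤ (S k').card := fun i hi => by
    by_cases hi' : i = k'
    · rw [hi']
    · exact (hmax i hi hi').trans (min_le_right _ _)
  have hjk : (S j).card ≤ (S k).card := by
    by_cases hj' : j = k
    · rw [hj']
    · exact (hdom j hj').trans hle
  have hk := hprefix.left_le_of_half_sub_lt hs hm hα1 hn
    ((not_le.mp hj).trans_le (by exact_mod_cast hjk))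
  have hk' := hprefix.left_le_of_forall_ne_le hs hα1 hn hkk' hk
    fun i hi => by exact_mod_cast hdom i hi
  exact ⟨⟨hk, hprefix.le_right hs hm k⟩, hk', hprefix.le_right hs hm k'⟩

/-- Let `S_1,…,S_m` be an `α`-balanced partition of `{1,…,n}` with
`m ≥ 2` and `0 < α < 1/(4m)` (α-balanced: for every permutation `π` of the bins there is
`b` with `∑_{j≤b} |S_{π(j)}| ∈ [n/2 ± αn]`). Let `k ≠ k'` be indices of the two largest
parts. Then either both `|S_k|, |S_{k'}| ∈ [n/2 ± αn]`, or `|S_j| ≤ (1/2 − 1/(4m))·n`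
for every `j`. -/
theorem stmt_15 (n m : ℕ) (hn : 1 ≤ n) (hm : 2 ≤ m) (α : ℝ)
    (hα0 : 0 < α) (hα1 : α < 1 / (4 * m))
    (S : Fin m → Finset (Fin n))
    (hdisj : ∀ i j, i ≠ j → Disjoint (S i) (S j))
    (hcover : ∀ x : Fin n, ∃ i, x ∈ S i)
    (hbal : ∀ π : Equiv.Perm (Fin m), ∃ b : Fin m,
      (n:ℝ)/2 - α * n ≤ (∑ j ∈ Finset.Iic b, ((S (π j)).card : ℝ)) ∧
      (∑ j ∈ Finset.Iic b, ((S (π j)).card : ℝ)) ≤ (n:ℝ)/2 + α * n)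
    (k k' : Fin m) (hkk' : k ≠ k')
    (hmax : ∀ j, j ≠ k → j ≠ k' → (S j).card ≤ min (S k).card (S k').card) :
    (((n:ℝ)/2 - α * n ≤ ((S k).card : ℝ) ∧ ((S k).card : ℝ) ≤ (n:ℝ)/2 + α * n) ∧
     ((n:ℝ)/2 - α * n ≤ ((S k').card : ℝ) ∧ ((S k').card : ℝ) ≤ (n:ℝ)/2 + α * n)) ∨
    (∀ j, ((S j).card : ℝ) ≤ (1/2 - 1/(4 * (m:ℝ))) * n) :=
  stmt_15_general n m hm α hα1 S hcover hbal k k' hkk' hmax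
end
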